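/- Given a commutative ladder of abelian groups with exact rows A_i → B_i → C_i → D_i → E_i (vertical maps from level i+1 to level i): if (B_i) is a,b-surjective, (D_i) is (a+b),c-surjective, and (E_i) is (a+b),d-injective, then (C_i) is a,(b+c)-surjective. -/

import Mathlib

/-!
Chase the diagram as in the classical four lemma, keeping track of levels. Given `x` at level
`e` hit from `C_{b+c+e}` by `y`, the image `w` of `y` in `D_{b+e}` is killed by `δ` and is hit
from `c` levels higher, so by `(a+b),c`-surjectivity of `D` it lifts to any level; the lift
lands in the kernel of `δ` after dropping `d` levels, by `(a+b),d`-injectivity of `E`. Hence it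
comes from some `v ∈ C_{b+f}`. The discrepancy between `v` and `y` at level `b+e` lies in the
kernel of `γ`, i.e. comes from `B_{b+e}`, and `a,b`-surjectivity of `B` lifts its image at
level `e` to level `f`; correcting `v` by this lift gives a preimage of `x` at level `f`.
-/

open CategoryTheory Opposite

/-- The transition map from level `j` to level `i` (for `i ≤ j`) of an inverse system of
abelian groups indexed by `ℕ`. -/
noncomputable def InvSys.trans (F : ℕᵒᵖ ⥤ AddCommGrpCat) {i j : ℕ} (h : i ≤ j) :
    F.obj (op j) → F.obj (op i) :=
  F.map (homOfLE h).op

/-- `a,b`-injectivity of an inverse system of abelian groups. -/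
def InvSys.IsInjective (F : ℕᵒᵖ ⥤ AddCommGrpCat) (a b : ℕ) : Prop :=
  ∀ c (_ : a ≤ c), ∀ x : F.obj (op (b + c)),
    InvSys.trans F (by omega : a ≤ b + c) x = 0 →
    InvSys.trans F (by omega : c ≤ b + c) x = 0

/-- `a,b`-surjectivity of an inverse system of abelian groups. -/
def InvSys.IsSurjective (F : ℕᵒᵖ ⥤ AddCommGrpCat) (a b : ℕ) : Prop :=
  ∀ c (_ : a ≤ c), ∀ x : F.obj (op c),
    (∃ y : F.obj (op (b + c)), InvSys.trans F (by omega : c ≤ b + c) y = x) →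
    ∀ d (_ : c ≤ d), ∃ z : F.obj (op d), InvSys.trans F (by omega : c ≤ d) z = x

namespace InvSys

section Transition

variable {F G : ℕᵒᵖ ⥤ AddCommGrpCat}

lemma trans_trans {i j k : ℕ} (hij : i ≤ j) (hjk : j ≤ k) (x : F.obj (op k)) :
    trans F hij (trans F hjk x) = trans F (hij.trans hjk) x := by
  change (F.map _ ≫ F.map _) x = F.map _ x
  rw [← F.map_comp]
  rfl

lemma app_trans (η : F ⟶ G) {i j : ℕ} (h : i ≤ j) (x : F.obj (op j)) :
    η.app (op i) (trans F h x) = trans G h (η.app (op j) x) := by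
  change (F.map _ ≫ η.app _) x = (η.app _ ≫ G.map _) x
  rw [η.naturality]

lemma trans_sub {i j : ℕ} (h : i ≤ j) (x y : F.obj (op j)) :
    trans F h (x - y) = trans F h x - trans F h y :=
  map_sub (F.map (homOfLE h).op).hom x y

lemma trans_zero {i j : ℕ} (h : i ≤ j) : trans F h (0 : F.obj (op j)) = 0 :=
  map_zero (F.map (homOfLE h).op).hom

end Transition

lemma exists_trans_eq_of_app_eq_zero {D E : ℕᵒᵖ ⥤ AddCommGrpCat} (δ : D ⟶ E) {a c d : ℕ}
    (hD : IsSurjective D a c) (hE : IsInjective E a d) {n : ℕ} (han : a ≤ n)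
    (w : D.obj (op n)) (hw : ∃ y : D.obj (op (c + n)), trans D (by omega) y = w)
    (hδw : δ.app (op n) w = 0) {m : ℕ} (hnm : n ≤ m) :
    ∃ u : D.obj (op m), trans D hnm u = w ∧ δ.app (op m) u = 0 := by
  obtain ⟨u, hu⟩ := hD n han w hw (d + m) (by omega)
  have hδu : trans E (by omega : a ≤ d + m) (δ.app (op (d + m)) u) = 0 := by
    rw [← trans_trans (by omega : a ≤ n) (by omega : n ≤ d + m), ← app_trans, hu, hδw,
      trans_zero]
  refine ⟨trans D (by omega : m ≤ d + m) u, by rw [trans_trans, hu], ?_⟩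
  rw [app_trans]
  exact hE m (by omega) _ hδu

lemma exists_trans_app_eq_of_app_eq_zero {B C D : ℕᵒᵖ ⥤ AddCommGrpCat} (β : B ⟶ C)
    (γ : C ⟶ D) {a b e f : ℕ} (hexC : Function.Exact (β.app (op (b + e))) (γ.app (op (b + e))))
    (hB : IsSurjective B a b) (hae : a ≤ e) (hef : e ≤ f) (p : C.obj (op (b + e)))
    (hγp : γ.app (op (b + e)) p = 0) :
    ∃ s : B.obj (op f), trans C hef (β.app (op f) s) = trans C (by omega) p := by
  obtain ⟨q, rfl⟩ := (hexC p).mp hγp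
  obtain ⟨s, hs⟩ := hB e hae (trans B (by omega) q) ⟨q, rfl⟩ f hef
  exact ⟨s, by rw [← app_trans, hs, app_trans]⟩

end InvSys

open InvSys in
theorem invSys_five_lemma_surjective_general
    (B C D E : ℕᵒᵖ ⥤ AddCommGrpCat)
    (β : B ⟶ C) (γ : C ⟶ D) (δ : D ⟶ E)
    (hexC : ∀ i : ℕ, Function.Exact (β.app (op i)) (γ.app (op i)))
    (hexD : ∀ i : ℕ, Function.Exact (γ.app (op i)) (δ.app (op i)))
    (a b c d : ℕ)
    (hB : InvSys.IsSurjective B a b)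
    (hD : InvSys.IsSurjective D (a + b) c)
    (hE : InvSys.IsInjective E (a + b) d) :
    InvSys.IsSurjective C a (b + c) := by
  rintro e hae x ⟨y, rfl⟩ f hef
  set w := γ.app (op (b + e)) (trans C (by omega) y)
  have hw : ∃ y' : D.obj (op (c + (b + e))), trans D (by omega) y' = w :=
    ⟨γ.app _ (trans C (by omega) y), by rw [← app_trans, trans_trans]⟩
  obtain ⟨u, hu, hδu⟩ := exists_trans_eq_of_app_eq_zero δ hD hE (by omega) w hw
    ((hexD _).apply_apply_eq_zero _) (by omega : b + e ≤ b + f)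
  obtain ⟨v, rfl⟩ := (hexD (b + f) u).mp hδu
  have hγp : γ.app (op (b + e)) (trans C (by omega) v - trans C (by omega) y) = 0 := by
    rw [map_sub, app_trans, hu, sub_self]
  obtain ⟨s, hs⟩ := exists_trans_app_eq_of_app_eq_zero β γ (hexC _) hB hae hef _ hγp
  refine ⟨trans C (by omega) v - β.app (op f) s, ?_⟩
  rw [trans_sub, hs, trans_sub, trans_trans, trans_trans, trans_trans]
  abel

/-- Generalized five lemma for inverse systems (surjectivity part): given a commutative
ladder of inverse systems of abelian groups with exact rows
`A_i → B_i → C_i → D_i → E_i`, if `(B_i)` is `a,b`-surjective, `(D_i)` is `(a+b),c`-surjective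
and `(E_i)` is `(a+b),d`-injective, then `(C_i)` is `a,(b+c)`-surjective. -/
theorem invSys_five_lemma_surjective
    (A B C D E : ℕᵒᵖ ⥤ AddCommGrpCat)
    (α : A ⟶ B) (β : B ⟶ C) (γ : C ⟶ D) (δ : D ⟶ E)
    (hexB : ∀ i : ℕ, Function.Exact (α.app (op i)) (β.app (op i)))
    (hexC : ∀ i : ℕ, Function.Exact (β.app (op i)) (γ.app (op i)))
    (hexD : ∀ i : ℕ, Function.Exact (γ.app (op i)) (δ.app (op i)))
    (a b c d : ℕ)
    (hB : InvSys.IsSurjective B a b)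
    (hD : InvSys.IsSurjective D (a + b) c)
    (hE : InvSys.IsInjective E (a + b) d) :
    InvSys.IsSurjective C a (b + c) :=
  invSys_five_lemma_surjective_general B C D E β γ δ hexC hexD a b c d hB hD hE
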